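/- arXiv:2112.03782 — 2 statements merged into one kernel-verified Lean document; each statement's English description precedes it below -/
import Mathlib

section
/- Suppose x and y are positive integers with y > 1 satisfying x^2·(x+1) = 2·y^4. If x is odd, then there exist coprime positive integers y1 and y2 with y = y1·y2, x = y1^2, and x + 1 = 2·y2^4; in particular y1^2 + 1 = 2·y2^4. -/
theorem m5_n4_odd_factorization (x y : ℕ) (hx : 0 < x) (hy : 1 < y)
    (heq : x ^ 2 * (x + 1) = 2 * y ^ 4) (hodd : Odd x) :
    ∃ y1 y2 : ℕ, 0 < y1 ∧ 0 < y2 ∧ Nat.Coprime y1 y2 ∧ y = y1 * y2 ∧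
      x = y1 ^ 2 ∧ x + 1 = 2 * y2 ^ 4 ∧ y1 ^ 2 + 1 = 2 * y2 ^ 4 := by
  obtain ⟨m, hm⟩ : 2 ∣ x + 1 := by
    obtain ⟨k, hk⟩ := hodd; omega
  have hm' : x ^ 2 * m = y ^ 4 := by
    have : 2 * (x ^ 2 * m) = 2 * y ^ 4 := by rw [← heq, hm]; ring
    omega
  have hcop : Nat.Coprime x m := by
    have h1 : Nat.Coprime x (x + 1) := by simp
    exact Nat.Coprime.coprime_dvd_right ⟨2, by omega⟩ h1
  have hcop2 : Nat.Coprime (x ^ 2) m := (hcop.pow_left 2)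
  have hunit : IsUnit (gcd (x ^ 2) m) := by
    rw [Nat.isUnit_iff]; exact hcop2
  obtain ⟨a, ha⟩ := exists_eq_pow_of_mul_eq_pow hunit hm'
  have hunit2 : IsUnit (gcd m (x ^ 2)) := by
    rw [Nat.isUnit_iff]; exact hcop2.symm
  obtain ⟨b, hb⟩ := exists_eq_pow_of_mul_eq_pow hunit2 (by rw [mul_comm]; exact hm')
  have hxa : x = a ^ 2 := by
    have : x ^ 2 = (a ^ 2) ^ 2 := by rw [ha]; ring
    exact Nat.pow_left_injective (by norm_num) this
  have hy4 : y ^ 4 = (a * b) ^ 4 := by rw [← hm', ha, hb]; ring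
  have hyab : y = a * b := Nat.pow_left_injective (by norm_num) hy4
  have ha0 : 0 < a := by nlinarith [hxa, hx]
  have hb0 : 0 < b := by
    rcases Nat.eq_zero_or_pos b with h | h
    · subst h; omega
    · exact h
  have hcab : Nat.Coprime a b := by
    have := hcop
    rw [hxa, hb] at this
    exact (Nat.coprime_pow_left_iff (by norm_num : 0 < 2) a (b^4)).mp this |>
      (fun h => (Nat.coprime_pow_right_iff (by norm_num : 0 < 4) a b).mp h)
  refine ⟨a, b, ha0, hb0, hcab, hyab, hxa, ?_, ?_⟩ <;> omega
end

section
/- Let p be an odd prime, m ≥ 6 an integer with ord_2(b_m) = 2 where b_m is as defined, a_m odd coprime to b_m, and let x be a positive even integer with gcd(x, a_m·x − b_m) even. Then ord_2(gcd(x, a_m·x − b_m)) = 2, and one of ord_2(x), ord_2(a_m·x − b_m) equals 2 while the other is at least p − 1 whenever x·(x+1)·(a_m x − b_m) = c_m·y^p with ord_2(c_m) = 1. -/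
/-!
Write `v = ord₂ x` and `w = ord₂ (a x - b)`. Since `x + 1` is odd and `ord₂ c = 1`, taking `ord₂`
of `x (x + 1) (a x - b) = c y^p` gives `v + w = 1 + p · ord₂ y`. As `a` is odd and `ord₂ b = 2`,
the ultrametric inequality forces `w = min v 2` unless `v = 2`, in which case `w ≥ 2`. Then
`v + w ≥ 2`, so `ord₂ y ≥ 1` and `v + w ≥ p + 1`: this rules out `v = w = 1`, and in the two
remaining cases the smaller valuation is `2` and the other one is at least `p - 1`.
-/

namespace padicValInt

variable {p : ℕ}

protected theorem neg (z : ℤ) : padicValInt p (-z) = padicValInt p z := by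
  simp only [padicValInt, Int.natAbs_neg]

variable [Fact p.Prime]

protected theorem pow (n : ℕ) (y : ℤ) : padicValInt p (y ^ n) = n * padicValInt p y := by
  simp only [padicValInt, Int.natAbs_pow, padicValNat.pow]

theorem mul_eq_right_of_not_dvd {a z : ℤ} (ha : ¬(p : ℤ) ∣ a) (hz : z ≠ 0) :
    padicValInt p (a * z) = padicValInt p z := by
  rw [padicValInt.mul (by rintro rfl; exact ha (dvd_zero _)) hz, eq_zero_of_not_dvd ha, zero_add]

theorem min_le_sub {u w : ℤ} (h : u - w ≠ 0) :
    min (padicValInt p u) (padicValInt p w) ≤ padicValInt p (u - w) := by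
  have hcast : ((u - w : ℤ) : ℚ) = u + -(w : ℚ) := by push_cast; ring
  have := padicValRat.min_le_padicValRat_add (p := p) (q := u) (r := -w)
    (hcast ▸ Int.cast_ne_zero.mpr h)
  rw [padicValRat.neg, ← hcast] at this
  simp only [padicValRat.of_int] at this
  exact_mod_cast this

theorem sub_eq_min {u w : ℤ} (hu : u ≠ 0) (hw : w ≠ 0)
    (h : padicValInt p u ≠ padicValInt p w) :
    padicValInt p (u - w) = min (padicValInt p u) (padicValInt p w) := by
  have huw : u - w ≠ 0 := fun h0 => h (by rw [sub_eq_zero.mp h0])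
  have h₁ := min_le_sub (p := p) huw
  have h₂ := min_le_sub (p := p) (u := u - w) (w := -w) (by rwa [sub_neg_eq_add, sub_add_cancel])
  have h₃ := min_le_sub (p := p) (u := u) (w := u - w) (by rwa [sub_sub_cancel])
  rw [sub_neg_eq_add, sub_add_cancel, padicValInt.neg] at h₂
  rw [sub_sub_cancel] at h₃
  omega

theorem _root_.padicValNat_intGcd {u w : ℤ} (hu : u ≠ 0) (hw : w ≠ 0) :
    padicValNat p (Int.gcd u w) = min (padicValInt p u) (padicValInt p w) := by
  have := congrArg (· p) (Nat.factorization_gcd (Int.natAbs_ne_zero.mpr hu)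
    (Int.natAbs_ne_zero.mpr hw))
  simp only [Finsupp.inf_apply, Nat.factorization_def _ Fact.out] at this
  exact this

end padicValInt

theorem min_eq_two_of_add_eq_one_add_mul {p v w k : ℕ} (hp : 2 ≤ p) (hv : 1 ≤ v)
    (hw : min v 2 ≤ w) (hw_eq : v ≠ 2 → w = min v 2) (h : v + w = 1 + p * k) :
    min v w = 2 ∧ ((v = 2 ∧ p - 1 ≤ w) ∨ (w = 2 ∧ p - 1 ≤ v)) := by
  have hk : p ≤ p * k := by
    refine Nat.le_mul_of_pos_right p (Nat.pos_of_ne_zero fun hk => ?_)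
    rw [hk, mul_zero] at h
    omega
  omega

theorem ord2_gcd_case3_general (p : ℕ) (hp : p.Prime)
    (a b c x y : ℤ) (hy : 0 < y)
    (hb2 : padicValInt 2 b = 2) (haodd : Odd a)
    (hxeven : Even x)
    (hc2 : padicValInt 2 c = 1)
    (heq : x * (x + 1) * (a * x - b) = c * y ^ p) :
    padicValNat 2 (Int.gcd x (a * x - b)) = 2 ∧
      ((padicValInt 2 x = 2 ∧ (p - 1 : ℕ) ≤ padicValInt 2 (a * x - b)) ∨
       (padicValInt 2 (a * x - b) = 2 ∧ (p - 1 : ℕ) ≤ padicValInt 2 x)) := by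
  have : Fact (Nat.Prime 2) := ⟨Nat.prime_two⟩
  have not_dvd_of_odd {z : ℤ} (hz : Odd z) : ¬((2 : ℕ) : ℤ) ∣ z :=
    Int.not_even_iff_odd.mpr hz ∘ even_iff_two_dvd.mpr
  have ha : a ≠ 0 := by rintro rfl; simp at haodd
  have hb : b ≠ 0 := by rintro rfl; simp at hb2
  have hc : c ≠ 0 := by rintro rfl; simp at hc2
  have hyp : y ^ p ≠ 0 := pow_ne_zero p hy.ne'
  obtain ⟨⟨hx, hx₁⟩, hz⟩ : (x ≠ 0 ∧ x + 1 ≠ 0) ∧ a * x - b ≠ 0 := by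
    rw [← mul_ne_zero_iff, ← mul_ne_zero_iff, heq]
    exact mul_ne_zero hc hyp
  have hax : padicValInt 2 (a * x) = padicValInt 2 x :=
    padicValInt.mul_eq_right_of_not_dvd (not_dvd_of_odd haodd) hx
  have hval : padicValInt 2 x + padicValInt 2 (a * x - b) = 1 + p * padicValInt 2 y := by
    have := congrArg (padicValInt 2) heq
    rwa [padicValInt.mul (mul_ne_zero hx hx₁) hz, padicValInt.mul hx hx₁, padicValInt.mul hc hyp,
      padicValInt.pow, hc2, padicValInt.eq_zero_of_not_dvd (not_dvd_of_odd hxeven.add_one),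
      add_zero] at this
  have hv : 1 ≤ padicValInt 2 x :=
    ((padicValInt_dvd_iff 1 x).mp (by simpa using hxeven.two_dvd)).resolve_left hx
  have hw : min (padicValInt 2 x) 2 ≤ padicValInt 2 (a * x - b) := by
    simpa only [hax, hb2] using padicValInt.min_le_sub (p := 2) hz
  have hw_eq (h : padicValInt 2 x ≠ 2) : padicValInt 2 (a * x - b) = min (padicValInt 2 x) 2 := by
    rw [padicValInt.sub_eq_min (mul_ne_zero ha hx) hb (by rwa [hax, hb2]), hax, hb2]
  rw [padicValNat_intGcd hx hz]
  exact min_eq_two_of_add_eq_one_add_mul hp.two_le hv hw hw_eq hval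

theorem ord2_gcd_case3 (p : ℕ) (hp : p.Prime) (hpodd : Odd p)
    (m : ℤ) (hm : 6 ≤ m)
    (a b c x y : ℤ) (ha : 0 < a) (hb : 0 < b) (hc : 0 < c) (hx : 0 < x) (hy : 0 < y)
    (hb2 : padicValInt 2 b = 2) (haodd : Odd a) (hab : IsCoprime a b)
    (hxeven : Even x) (hgcdeven : 2 ∣ Int.gcd x (a * x - b))
    (hc2 : padicValInt 2 c = 1)
    (heq : x * (x + 1) * (a * x - b) = c * y ^ p) :
    padicValNat 2 (Int.gcd x (a * x - b)) = 2 ∧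
      ((padicValInt 2 x = 2 ∧ (p - 1 : ℕ) ≤ padicValInt 2 (a * x - b)) ∨
       (padicValInt 2 (a * x - b) = 2 ∧ (p - 1 : ℕ) ≤ padicValInt 2 x)) :=
  ord2_gcd_case3_general p hp a b c x y hy hb2 haodd hxeven hc2 heq
end
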